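/- Let A ∈ ℝ^{n_x×n_x} be invertible, B ∈ ℝ^{n_x×n_u}, S ∈ ℝ^{n_x×n_x} symmetric positive definite, L ∈ ℝ^{n_u×n_x}, Y ∈ ℝ^{n_u×n_u} symmetric, R ∈ ℝ^{n_u×n_u} symmetric positive definite, ρ > 0 a real number, v, f ∈ ℝ^{n_u} vectors, and λ₁, λ₂ ≥ 0 real numbers. Suppose there exist a symmetric matrix Λ ∈ ℝ^{n_x×n_x} and a symmetric positive semidefinite matrix M ∈ ℝ^{n_u×n_u} satisfying the KKT stationarity conditions ρ·BᵀΛA + M L S⁻¹ = 0 and ρ·R + λ₁·v vᵀ + λ₂·f fᵀ − M + ρ·BᵀΛB = 0, and the complementary slackness condition Tr(M C) = 0, where C := L S⁻¹ Lᵀ − Y is negative semidefinite. Then C = 0, i.e., Y = L S⁻¹ Lᵀ. -/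

import Mathlib

/-!
Eliminating `M` from the second stationarity condition writes it as the positive definite
matrix `ρR + λ₁vvᵀ + λ₂ffᵀ` plus `ρBᵀΛB`. On the kernel of `M` the first stationarity condition
and the invertibility of `A` force `xᵀBᵀΛ = 0`, so the form of `ρBᵀΛB` vanishes there and `M` is
positive definite. Complementary slackness says `tr(M N) = 0` for `N = -C ⪰ 0`, and against a
positive definite `M` this forces `N = 0`.
-/

open Matrix
open scoped MatrixOrder ComplexOrder

namespace Matrix

variable {m n 𝕜 R : Type*} [Fintype m] [Fintype n]

theorem PosSemidef.eq_zero_of_trace_mul_eq_zero [DecidableEq n] [RCLike 𝕜] {M N : Matrix n n 𝕜}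
    (hN : N.PosSemidef) (hM : M.PosDef) (h : (M * N).trace = 0) : N = 0 := by
  obtain ⟨y, hy, rfl⟩ :=
    CStarAlgebra.isStrictlyPositive_iff_eq_star_mul_self.mp hM.isStrictlyPositive
  obtain ⟨z, rfl⟩ := CStarAlgebra.nonneg_iff_eq_star_mul_self.mp hN.nonneg
  -- `tr(yᴴy zᴴz) = ‖z yᴴ‖²` in the Frobenius norm.
  simp only [star_eq_conjTranspose] at h ⊢
  have hzy : z * yᴴ = 0 := by
    rw [← trace_conjTranspose_mul_self_eq_zero_iff, ← h, conjTranspose_mul,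
      conjTranspose_conjTranspose, ← Matrix.mul_assoc, trace_mul_comm]
    simp only [Matrix.mul_assoc]
  rw [hy.star.mul_left_eq_zero.mp hzy, Matrix.mul_zero]

theorem PosSemidef.posDef_of_eq_add [RCLike 𝕜] {M K E : Matrix n n 𝕜} (hM : M.PosSemidef)
    (hK : K.PosDef) (hMKE : M = K + E) (hE : ∀ x, M *ᵥ x = 0 → star x ᵥ* E = 0) :
    M.PosDef := by
  refine .of_dotProduct_mulVec_pos hM.isHermitian fun x hx =>
    (hM.dotProduct_mulVec_nonneg x).lt_of_ne' fun hx0 => ?_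
  have hMx := (hM.dotProduct_mulVec_zero_iff x).mp hx0
  have hKx := hK.dotProduct_mulVec_pos hx
  rw [show K = M - E by rw [hMKE, add_sub_cancel_right], sub_mulVec, hMx, dotProduct_sub,
    dotProduct_mulVec, hE x hMx, zero_dotProduct, dotProduct_zero, sub_zero] at hKx
  exact hKx.ne' rfl

theorem vecMul_mul_eq_zero_of_mulVec_eq_zero [CommRing R] [DecidableEq m] {M : Matrix n n R}
    (hM : M.IsSymm) {G : Matrix n m R} {A : Matrix m m R} (hA : IsUnit A.det) {W : Matrix n m R}
    (hGAMW : G * A + M * W = 0) (B : Matrix m n R) {x : n → R} (hx : M *ᵥ x = 0) :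
    x ᵥ* (G * B) = 0 := by
  have hxM : x ᵥ* M = 0 := by rw [← hM, vecMul_transpose, hx]
  have hxGA : x ᵥ* (G * A) = 0 := by
    rw [eq_neg_of_add_eq_zero_left hGAMW, vecMul_neg, ← vecMul_vecMul, hxM, zero_vecMul, neg_zero]
  have hxG : x ᵥ* G = 0 := by
    have := congrArg (· ᵥ* A⁻¹) hxGA
    rwa [← vecMul_vecMul, zero_vecMul, vecMul_vecMul, mul_nonsing_inv _ hA, vecMul_one] at this
  rw [← vecMul_vecMul, hxG, zero_vecMul]

end Matrix

theorem stmt_3_general {nx nu : ℕ}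
    (A : Matrix (Fin nx) (Fin nx) ℝ) (hA : IsUnit A.det)
    (B : Matrix (Fin nx) (Fin nu) ℝ)
    (S : Matrix (Fin nx) (Fin nx) ℝ)
    (L : Matrix (Fin nu) (Fin nx) ℝ)
    (Y : Matrix (Fin nu) (Fin nu) ℝ)
    (R : Matrix (Fin nu) (Fin nu) ℝ) (hR : R.PosDef)
    (ρ : ℝ) (hρ : 0 < ρ)
    (v f : Fin nu → ℝ) (lam₁ lam₂ : ℝ) (hlam₁ : 0 ≤ lam₁) (hlam₂ : 0 ≤ lam₂)
    (Λ : Matrix (Fin nx) (Fin nx) ℝ)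
    (M : Matrix (Fin nu) (Fin nu) ℝ) (hMsymm : M.IsSymm) (hM : M.PosSemidef)
    (hstat1 : ρ • (Bᵀ * Λ * A) + M * L * S⁻¹ = 0)
    (hstat2 : ρ • R + lam₁ • vecMulVec v v + lam₂ • vecMulVec f f - M
        + ρ • (Bᵀ * Λ * B) = 0)
    (hCnsd : (-(L * S⁻¹ * Lᵀ - Y)).PosSemidef)
    (hcs : (M * (L * S⁻¹ * Lᵀ - Y)).trace = 0) :
    L * S⁻¹ * Lᵀ - Y = 0 := by
  have hK : (ρ • R + lam₁ • vecMulVec v v + lam₂ • vecMulVec f f).PosDef := by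
    have hv : (vecMulVec v v).PosSemidef := by simpa using posSemidef_vecMulVec_self_star v
    have hf : (vecMulVec f f).PosSemidef := by simpa using posSemidef_vecMulVec_self_star f
    exact ((hR.smul hρ).add_posSemidef (hv.smul hlam₁)).add_posSemidef (hf.smul hlam₂)
  have hMpd : M.PosDef := by
    refine hM.posDef_of_eq_add hK (E := (ρ • Bᵀ) * Λ * B) ?_ fun x hx => ?_
    · rw [eq_comm, ← sub_eq_zero, ← hstat2]
      simp only [Matrix.smul_mul]
      abel
    · rw [star_trivial]
      refine vecMul_mul_eq_zero_of_mulVec_eq_zero hMsymm hA (W := L * S⁻¹) ?_ B hx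
      simpa only [Matrix.smul_mul, ← Matrix.mul_assoc] using hstat1
  rw [← neg_eq_zero]
  refine hCnsd.eq_zero_of_trace_mul_eq_zero hMpd ?_
  rw [Matrix.mul_neg, trace_neg, hcs, neg_zero]

/-- algebraic core of Theorem 2: losslessness of the convex relaxation
in the chance-constrained MJLS covariance-steering subproblem. Given the KKT
stationarity conditions `ρ·BᵀΛA + M L S⁻¹ = 0` and
`ρ·R + λ₁·v vᵀ + λ₂·f fᵀ − M + ρ·BᵀΛB = 0`, the complementary slackness condition
`Tr(M C) = 0` with `C := L S⁻¹ Lᵀ − Y ⪯ 0` and `M ⪰ 0`, one has `C = 0`,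
i.e. `Y = L S⁻¹ Lᵀ`. -/
theorem stmt_3 {nx nu : ℕ}
    (A : Matrix (Fin nx) (Fin nx) ℝ) (hA : IsUnit A.det)
    (B : Matrix (Fin nx) (Fin nu) ℝ)
    (S : Matrix (Fin nx) (Fin nx) ℝ) (hSsymm : S.IsSymm) (hS : S.PosDef)
    (L : Matrix (Fin nu) (Fin nx) ℝ)
    (Y : Matrix (Fin nu) (Fin nu) ℝ) (hY : Y.IsSymm)
    (R : Matrix (Fin nu) (Fin nu) ℝ) (hRsymm : R.IsSymm) (hR : R.PosDef)
    (ρ : ℝ) (hρ : 0 < ρ)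
    (v f : Fin nu → ℝ) (lam₁ lam₂ : ℝ) (hlam₁ : 0 ≤ lam₁) (hlam₂ : 0 ≤ lam₂)
    (Λ : Matrix (Fin nx) (Fin nx) ℝ) (hΛ : Λ.IsSymm)
    (M : Matrix (Fin nu) (Fin nu) ℝ) (hMsymm : M.IsSymm) (hM : M.PosSemidef)
    (hstat1 : ρ • (Bᵀ * Λ * A) + M * L * S⁻¹ = 0)
    (hstat2 : ρ • R + lam₁ • vecMulVec v v + lam₂ • vecMulVec f f - M
        + ρ • (Bᵀ * Λ * B) = 0)
    (hCnsd : (-(L * S⁻¹ * Lᵀ - Y)).PosSemidef)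
    (hcs : (M * (L * S⁻¹ * Lᵀ - Y)).trace = 0) :
    L * S⁻¹ * Lᵀ - Y = 0 :=
  stmt_3_general A hA B S L Y R hR ρ hρ v f lam₁ lam₂ hlam₁ hlam₂ Λ M hMsymm hM hstat1 hstat2 hCnsd
    hcs
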